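/- arXiv:1402.0129 — 3 statements merged into one kernel-verified Lean document; each statement's English description precedes it below -/
import Mathlib

section
/- (Direct-sum majorization lemma) For any density matrix ρ and any d×d unitary matrix U relating two orthonormal bases, with induced probability vectors p and q, the 2d-dimensional vector (p₁,…,p_d,q₁,…,q_d) is majorized by the (d+1)-dimensional vector (1, s₁, s₂−s₁, …, s_d−s_{d−1}), i.e. p ⊕ q ≺ (1) ⊕ W (extending the shorter vector by zeros). -/
open scoped BigOperators Matrix ComplexConjugate ComplexOrder

/-- Shannon entropy of a finite real vector (natural logarithm). -/
noncomputable def shannonEntropy {n : Type*} [Fintype n] (x : n → ℝ) : ℝ :=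
  -∑ i, x i * Real.log (x i)

/-- Von Neumann entropy of a Hermitian matrix, `-∑ λᵢ ln λᵢ`. -/
noncomputable def vonNeumannEntropy {d : ℕ} {ρ : Matrix (Fin d) (Fin d) ℂ}
    (hρ : ρ.IsHermitian) : ℝ :=
  -∑ i, hρ.eigenvalues i * Real.log (hρ.eigenvalues i)

/-- `Majorizes x y` means `x ≺ y`: the vectors have equal total sums and, for every `k`,
the sum of the `k` largest entries of `x` is at most the sum of the `k` largest entries
of `y` (formulated via subsets; the two index types may differ, which corresponds to
padding the shorter vector with zeros). -/
def Majorizes {ι κ : Type*} [Fintype ι] [Fintype κ] (x : ι → ℝ) (y : κ → ℝ) : Prop :=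
  (∑ i, x i = ∑ j, y j) ∧
  ∀ A : Finset ι, ∃ B : Finset κ, B.card ≤ A.card ∧ ∑ i ∈ A, x i ≤ ∑ j ∈ B, y j

/-- The operator norm (largest singular value) of the submatrix of `U` with rows `I`
and columns `J`, expressed as the supremum of `|⟨x, U y⟩|` over unit vectors supported
on `I` resp. `J`. -/
noncomputable def subOpNorm {d : ℕ} (U : Matrix (Fin d) (Fin d) ℂ)
    (I J : Finset (Fin d)) : ℝ :=
  sSup { r : ℝ | ∃ (x : I → ℂ) (y : J → ℂ),
    (∑ i, ‖x i‖ ^ 2 = 1) ∧ (∑ j, ‖y j‖ ^ 2 = 1) ∧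
    r = ‖∑ i : I, ∑ j : J, (starRingEnd ℂ) (x i) * U i.1 j.1 * y j‖ }

/-- `sCoef U k` is the coefficient `s_k`: the maximal operator norm of a submatrix of `U`
of class `k`, i.e. with `#rows + #cols = k + 1` (for `k = 0` the set is empty and the
supremum equals `0`). -/
noncomputable def sCoef {d : ℕ} (U : Matrix (Fin d) (Fin d) ℂ) (k : ℕ) : ℝ :=
  sSup { r : ℝ | ∃ I J : Finset (Fin d), I.Nonempty ∧ J.Nonempty ∧
    I.card + J.card = k + 1 ∧ r = subOpNorm U I J }

/-- The vector `W = (s₁, s₂ - s₁, …, s_d - s_{d-1})`. -/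
noncomputable def Wvec {d : ℕ} (U : Matrix (Fin d) (Fin d) ℂ) : Fin d → ℝ :=
  fun k => sCoef U (k.val + 1) - (if k.val = 0 then 0 else sCoef U k.val)

/-!
Fix `I, J` and let `s` be the norm of the submatrix `U_{IJ}`. For a pure state `v`, let `a` be
the component of `v` on the coordinates in `I` and `b` its component in the span of the columns
`b_j`, `j ∈ J`. Then `∑_{i∈I} p_i + ∑_{j∈J} q_j = ‖a‖² + ‖b‖² = re ⟪a + b, v⟫`, while
`‖a + b‖² ≤ ‖a‖² + ‖b‖² + 2 s ‖a‖ ‖b‖ ≤ (1 + s) (‖a‖² + ‖b‖²)`; hence `‖a‖² + ‖b‖² ≤ 1 + s`.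
A density matrix is a sum of unnormalized pure states `v vᴴ`, so the bound persists, and
`s ≤ s_k` for `k = |I| + |J| - 1`. As the first `k + 1` entries of `(1) ⊕ W` add up to `1 + s_k`,
this is the majorization.
-/

open Matrix WithLp

section extendByZero

variable {ι 𝕜 : Type*} [DecidableEq ι] [RCLike 𝕜] {I : Finset ι}

theorem Finset.sum_dite_mem_univ [Fintype ι] {M : Type*} [AddCommMonoid M] (I : Finset ι)
    (f : I → M) :
    ∑ i, (if h : i ∈ I then f ⟨i, h⟩ else 0) = ∑ i : I, f i := by
  rw [← Finset.sum_subset I.subset_univ fun i _ hi => dif_neg hi, ← Finset.sum_attach I,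
    Finset.univ_eq_attach]
  exact Finset.sum_congr rfl fun i _ => dif_pos i.2

noncomputable def extendByZero (x : I → 𝕜) : EuclideanSpace 𝕜 ι :=
  toLp 2 fun i => if h : i ∈ I then x ⟨i, h⟩ else 0

theorem extendByZero_smul (c : 𝕜) (x : I → 𝕜) :
    extendByZero (c • x) = c • extendByZero x := by
  ext i
  by_cases h : i ∈ I <;> simp [extendByZero, h]

variable [Fintype ι]

theorem inner_extendByZero_left (x : I → 𝕜) (w : EuclideanSpace 𝕜 ι) :
    inner 𝕜 (extendByZero x) w = ∑ i : I, conj (x i) * w i := by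
  rw [PiLp.inner_apply, ← Finset.sum_dite_mem_univ]
  refine Finset.sum_congr rfl fun i _ => ?_
  by_cases h : i ∈ I <;> simp [extendByZero, h, mul_comm]

theorem norm_extendByZero_sq (x : I → 𝕜) :
    ‖extendByZero x‖ ^ 2 = ∑ i : I, ‖x i‖ ^ 2 := by
  rw [EuclideanSpace.norm_sq_eq, ← Finset.sum_dite_mem_univ]
  refine Finset.sum_congr rfl fun i _ => ?_
  by_cases h : i ∈ I <;> simp [extendByZero, h]

theorem norm_extendByZero_eq_one_iff (x : I → 𝕜) :
    ‖extendByZero x‖ = 1 ↔ ∑ i, ‖x i‖ ^ 2 = 1 := by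
  rw [← norm_extendByZero_sq, pow_eq_one_iff_of_nonneg (norm_nonneg _) two_ne_zero]

theorem inner_extendByZero_restrict_self (w : EuclideanSpace 𝕜 ι) :
    inner 𝕜 (extendByZero fun i : I => w i) w = (‖extendByZero fun i : I => w i‖ : 𝕜) ^ 2 := by
  rw [inner_extendByZero_left, ← RCLike.ofReal_pow, norm_extendByZero_sq]
  push_cast
  exact Finset.sum_congr rfl fun i _ => RCLike.conj_mul _

end extendByZero

theorem norm_sq_add_norm_sq_le_of_inner {𝕜 E : Type*} [RCLike 𝕜] [NormedAddCommGroup E]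
    [InnerProductSpace 𝕜 E] {a b v : E} {s : ℝ} (hs : 0 ≤ s)
    (ha : RCLike.re (inner 𝕜 a v) = ‖a‖ ^ 2) (hb : RCLike.re (inner 𝕜 b v) = ‖b‖ ^ 2)
    (hab : ‖inner 𝕜 a b‖ ≤ s * ‖a‖ * ‖b‖) :
    ‖a‖ ^ 2 + ‖b‖ ^ 2 ≤ (1 + s) * ‖v‖ ^ 2 := by
  have h_le_mul : ‖a‖ ^ 2 + ‖b‖ ^ 2 ≤ ‖a + b‖ * ‖v‖ := by
    rw [← ha, ← hb, ← map_add, ← inner_add_left]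
    exact (RCLike.re_le_norm _).trans (norm_inner_le_norm _ _)
  have h_add : ‖a + b‖ ^ 2 ≤ (1 + s) * (‖a‖ ^ 2 + ‖b‖ ^ 2) := by
    rw [norm_add_sq (𝕜 := 𝕜)]
    nlinarith [(RCLike.re_le_norm (inner 𝕜 a b)).trans hab,
      mul_nonneg hs (sq_nonneg (‖a‖ - ‖b‖))]
  set t := ‖a‖ ^ 2 + ‖b‖ ^ 2
  have h_sq : t * t ≤ t * ((1 + s) * ‖v‖ ^ 2) := calc
    t * t ≤ (‖a + b‖ * ‖v‖) ^ 2 := by nlinarith [show 0 ≤ t by positivity]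
    _ = ‖a + b‖ ^ 2 * ‖v‖ ^ 2 := by ring
    _ ≤ (1 + s) * t * ‖v‖ ^ 2 := by gcongr
    _ = t * ((1 + s) * ‖v‖ ^ 2) := by ring
  rcases (show 0 ≤ t by positivity).eq_or_lt with h0 | hpos
  · rw [← h0]; positivity
  · exact le_of_mul_le_mul_left h_sq hpos

theorem norm_toEuclideanCLM_of_mem_unitaryGroup {n 𝕜 : Type*} [Fintype n] [DecidableEq n]
    [RCLike 𝕜] {U : Matrix n n 𝕜} (hU : U ∈ unitaryGroup n 𝕜) (v : EuclideanSpace 𝕜 n) :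
    ‖toEuclideanCLM (n := n) (𝕜 := 𝕜) U v‖ = ‖v‖ :=
  ContinuousLinearMap.norm_map_of_mem_unitary (Unitary.map_mem _ hU) v

section subOpNorm

variable {d : ℕ} {U : Matrix (Fin d) (Fin d) ℂ} {I J : Finset (Fin d)}

theorem inner_extendByZero_toEuclideanCLM (U : Matrix (Fin d) (Fin d) ℂ) (x : I → ℂ)
    (y : J → ℂ) :
    inner ℂ (extendByZero x) (toEuclideanCLM (n := Fin d) (𝕜 := ℂ) U (extendByZero y)) =
      ∑ i, ∑ j, conj (x i) * U i.1 j.1 * y j := by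
  rw [inner_extendByZero_left]
  refine Finset.sum_congr rfl fun i _ => ?_
  rw [ofLp_toEuclideanCLM, mulVec, dotProduct, Finset.mul_sum, ← Finset.sum_dite_mem_univ]
  refine Finset.sum_congr rfl fun j _ => ?_
  by_cases h : j ∈ J <;> simp [extendByZero, h, mul_assoc]

theorem norm_sum_conj_mul_mul_le_one (hU : U ∈ unitaryGroup (Fin d) ℂ) {x : I → ℂ} {y : J → ℂ}
    (hx : ∑ i, ‖x i‖ ^ 2 = 1) (hy : ∑ j, ‖y j‖ ^ 2 = 1) :
    ‖∑ i, ∑ j, conj (x i) * U i.1 j.1 * y j‖ ≤ 1 := by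
  rw [← inner_extendByZero_toEuclideanCLM]
  refine (norm_inner_le_norm _ _).trans_eq ?_
  rw [norm_toEuclideanCLM_of_mem_unitaryGroup hU, (norm_extendByZero_eq_one_iff x).2 hx,
    (norm_extendByZero_eq_one_iff y).2 hy, one_mul]

theorem subOpNorm_nonneg (U : Matrix (Fin d) (Fin d) ℂ) (I J : Finset (Fin d)) :
    0 ≤ subOpNorm U I J :=
  Real.sSup_nonneg (by rintro _ ⟨x, y, -, -, rfl⟩; positivity)

theorem subOpNorm_le_one (hU : U ∈ unitaryGroup (Fin d) ℂ) (I J : Finset (Fin d)) :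
    subOpNorm U I J ≤ 1 :=
  Real.sSup_le (by rintro _ ⟨x, y, hx, hy, rfl⟩; exact norm_sum_conj_mul_mul_le_one hU hx hy)
    zero_le_one

theorem norm_inner_le_subOpNorm (hU : U ∈ unitaryGroup (Fin d) ℂ) {x : I → ℂ} {y : J → ℂ}
    (hx : ‖extendByZero x‖ = 1) (hy : ‖extendByZero y‖ = 1) :
    ‖inner ℂ (extendByZero x) (toEuclideanCLM (n := Fin d) (𝕜 := ℂ) U (extendByZero y))‖ ≤
      subOpNorm U I J := by
  rw [norm_extendByZero_eq_one_iff] at hx hy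
  refine le_csSup ⟨1, ?_⟩ ⟨x, y, hx, hy, by rw [inner_extendByZero_toEuclideanCLM]⟩
  rintro _ ⟨x, y, hx, hy, rfl⟩
  exact norm_sum_conj_mul_mul_le_one hU hx hy

theorem norm_inner_le_subOpNorm_mul (hU : U ∈ unitaryGroup (Fin d) ℂ) (x : I → ℂ)
    (y : J → ℂ) :
    ‖inner ℂ (extendByZero x) (toEuclideanCLM (n := Fin d) (𝕜 := ℂ) U (extendByZero y))‖ ≤
      subOpNorm U I J * ‖extendByZero x‖ * ‖extendByZero y‖ := by
  by_cases hx0 : extendByZero x = 0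
  · simp [hx0]
  by_cases hy0 : extendByZero y = 0
  · simp [hy0]
  have ha := norm_pos_iff.2 hx0
  have hb := norm_pos_iff.2 hy0
  have h_unit := norm_inner_le_subOpNorm hU
    (x := ((‖extendByZero x‖⁻¹ : ℝ) : ℂ) • x) (y := ((‖extendByZero y‖⁻¹ : ℝ) : ℂ) • y)
    (by rw [extendByZero_smul, norm_smul]; simp [ha.ne'])
    (by rw [extendByZero_smul, norm_smul]; simp [hb.ne'])
  rw [extendByZero_smul, extendByZero_smul, map_smul, inner_smul_left, inner_smul_right,
    norm_mul, norm_mul] at h_unit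
  simp only [Complex.conj_ofReal, Complex.norm_real, Real.norm_eq_abs, abs_inv, abs_norm]
    at h_unit
  rw [mul_assoc, ← div_le_iff₀ (by positivity)]
  calc _ = ‖extendByZero x‖⁻¹ * (‖extendByZero y‖⁻¹ * _) := by field_simp
    _ ≤ _ := h_unit

end subOpNorm

section densityMatrix

variable {d : ℕ} {U : Matrix (Fin d) (Fin d) ℂ}

theorem sum_norm_sq_add_sum_norm_sq_conjTranspose_mulVec_le (hU : U ∈ unitaryGroup (Fin d) ℂ)
    (I J : Finset (Fin d)) (w : Fin d → ℂ) :
    ∑ i ∈ I, ‖w i‖ ^ 2 + ∑ j ∈ J, ‖(Uᴴ *ᵥ w) j‖ ^ 2 ≤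
      (1 + subOpNorm U I J) * ∑ i, ‖w i‖ ^ 2 := by
  set T := toEuclideanCLM (n := Fin d) (𝕜 := ℂ) U
  set v : EuclideanSpace ℂ (Fin d) := toLp 2 w
  have hT_adjoint : T.adjoint v = toLp 2 (Uᴴ *ᵥ w) := by
    rw [← ContinuousLinearMap.star_eq_adjoint, ← map_star, star_eq_conjTranspose]
    rfl
  set a := extendByZero fun i : I => v i
  set c := extendByZero fun j : J => T.adjoint v j
  have ha : RCLike.re (inner ℂ a v) = ‖a‖ ^ 2 := by
    rw [inner_extendByZero_restrict_self, ← RCLike.ofReal_pow, RCLike.ofReal_re]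
  have hb : RCLike.re (inner ℂ (T c) v) = ‖T c‖ ^ 2 := by
    rw [← ContinuousLinearMap.adjoint_inner_right, inner_extendByZero_restrict_self,
      ← RCLike.ofReal_pow, RCLike.ofReal_re, norm_toEuclideanCLM_of_mem_unitaryGroup hU]
  have hab : ‖inner ℂ a (T c)‖ ≤ subOpNorm U I J * ‖a‖ * ‖T c‖ := by
    rw [norm_toEuclideanCLM_of_mem_unitaryGroup hU]
    exact norm_inner_le_subOpNorm_mul hU _ _
  have key := norm_sq_add_norm_sq_le_of_inner (subOpNorm_nonneg U I J) ha hb hab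
  rwa [norm_toEuclideanCLM_of_mem_unitaryGroup hU, norm_extendByZero_sq, norm_extendByZero_sq,
    EuclideanSpace.norm_sq_eq, hT_adjoint, Finset.sum_coe_sort I fun i => ‖v i‖ ^ 2,
    Finset.sum_coe_sort J fun j => ‖(toLp 2 (Uᴴ *ᵥ w)) j‖ ^ 2] at key

theorem re_sum_vecMulVec_apply_self {m n : Type*} [Fintype m] (v : m → n → ℂ) (i : n) :
    ((∑ k, vecMulVec (v k) (star (v k))) i i).re = ∑ k, ‖v k i‖ ^ 2 := by
  simp [Matrix.sum_apply, vecMulVec_apply, Complex.re_sum, RCLike.mul_conj, ← Complex.ofReal_pow]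

theorem sum_re_diag_add_sum_re_diag_conj_le (hU : U ∈ unitaryGroup (Fin d) ℂ)
    {ρ : Matrix (Fin d) (Fin d) ℂ} (hρ : ρ.PosSemidef) (I J : Finset (Fin d)) :
    ∑ i ∈ I, (ρ i i).re + ∑ j ∈ J, ((Uᴴ * ρ * U) j j).re ≤
      (1 + subOpNorm U I J) * ρ.trace.re := by
  obtain ⟨m, v, rfl⟩ := posSemidef_iff_eq_sum_vecMulVec.mp hρ
  have h_conj : Uᴴ * (∑ k, vecMulVec (v k) (star (v k))) * U =
      ∑ k, vecMulVec (Uᴴ *ᵥ v k) (star (Uᴴ *ᵥ v k)) := by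
    simp only [Finset.mul_sum, Finset.sum_mul, mul_vecMulVec, vecMulVec_mul, star_mulVec,
      conjTranspose_conjTranspose]
  rw [h_conj, trace, Complex.re_sum]
  simp only [diag_apply, re_sum_vecMulVec_apply_self]
  rw [Finset.sum_comm (s := I), Finset.sum_comm (s := J), Finset.sum_comm (t := Finset.univ),
    ← Finset.sum_add_distrib, Finset.mul_sum]
  exact Finset.sum_le_sum fun k _ =>
    sum_norm_sq_add_sum_norm_sq_conjTranspose_mulVec_le hU I J (v k)

end densityMatrix

section sCoef

variable {d : ℕ} {U : Matrix (Fin d) (Fin d) ℂ}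

theorem subOpNorm_empty_left (U : Matrix (Fin d) (Fin d) ℂ) (J : Finset (Fin d)) :
    subOpNorm U ∅ J = 0 := by
  rw [subOpNorm, ← Real.sSup_empty]
  congr 1
  ext
  simp

theorem subOpNorm_empty_right (U : Matrix (Fin d) (Fin d) ℂ) (I : Finset (Fin d)) :
    subOpNorm U I ∅ = 0 := by
  rw [subOpNorm, ← Real.sSup_empty]
  congr 1
  ext
  simp

theorem sCoef_zero (U : Matrix (Fin d) (Fin d) ℂ) : sCoef U 0 = 0 := by
  rw [sCoef, ← Real.sSup_empty]
  congr 1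
  refine Set.eq_empty_iff_forall_notMem.2 ?_
  rintro _ ⟨I, J, hI, hJ, hIJ, -⟩
  have := hI.card_pos
  have := hJ.card_pos
  omega

theorem subOpNorm_le_sCoef (hU : U ∈ unitaryGroup (Fin d) ℂ) {I J : Finset (Fin d)}
    (hI : I.Nonempty) (hJ : J.Nonempty) {k : ℕ} (hk : I.card + J.card = k + 1) :
    subOpNorm U I J ≤ sCoef U k :=
  le_csSup ⟨1, by rintro _ ⟨I, J, -, -, -, rfl⟩; exact subOpNorm_le_one hU I J⟩
    ⟨I, J, hI, hJ, hk, rfl⟩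

theorem sCoef_le_one (hU : U ∈ unitaryGroup (Fin d) ℂ) (k : ℕ) : sCoef U k ≤ 1 :=
  Real.sSup_le (by rintro _ ⟨I, J, -, -, -, rfl⟩; exact subOpNorm_le_one hU I J) zero_le_one

theorem one_le_subOpNorm_univ_singleton (hU : U ∈ unitaryGroup (Fin d) ℂ) (j : Fin d) :
    1 ≤ subOpNorm U Finset.univ {j} := by
  set T := toEuclideanCLM (n := Fin d) (𝕜 := ℂ) U
  set c := extendByZero fun _ : ({j} : Finset (Fin d)) => (1 : ℂ)
  have hc : ‖c‖ = 1 := by rw [norm_extendByZero_eq_one_iff]; simp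
  -- `c` is the basis vector `e_j`, and `T c`, the `j`-th column of `U`, is a unit vector.
  have hTc : extendByZero (fun i : (Finset.univ : Finset (Fin d)) => T c i) = T c := by
    ext i; simp [extendByZero]
  have h := norm_inner_le_subOpNorm hU (x := fun i : (Finset.univ : Finset (Fin d)) => T c i)
    (by rw [hTc, norm_toEuclideanCLM_of_mem_unitaryGroup hU, hc]) hc
  rwa [hTc, inner_self_eq_norm_sq_to_K, norm_toEuclideanCLM_of_mem_unitaryGroup hU, hc,
    RCLike.ofReal_one, one_pow, norm_one] at h

theorem sCoef_self (hU : U ∈ unitaryGroup (Fin d) ℂ) (hd : 0 < d) : sCoef U d = 1 :=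
  le_antisymm (sCoef_le_one hU d) <| (one_le_subOpNorm_univ_singleton hU ⟨0, hd⟩).trans <|
    subOpNorm_le_sCoef hU ⟨⟨0, hd⟩, Finset.mem_univ _⟩ (Finset.singleton_nonempty _) (by simp)

theorem exists_subOpNorm_le_sCoef (hU : U ∈ unitaryGroup (Fin d) ℂ) (hd : 0 < d)
    (I J : Finset (Fin d)) (hIJ : 0 < I.card + J.card) :
    ∃ m ≤ d, m + 1 ≤ I.card + J.card ∧ subOpNorm U I J ≤ sCoef U m := by
  rcases I.eq_empty_or_nonempty with rfl | hI
  · exact ⟨0, hd.le, hIJ, by rw [subOpNorm_empty_left, sCoef_zero]⟩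
  rcases J.eq_empty_or_nonempty with rfl | hJ
  · exact ⟨0, hd.le, hIJ, by rw [subOpNorm_empty_right, sCoef_zero]⟩
  by_cases hle : I.card + J.card ≤ d + 1
  · have := hI.card_pos
    exact ⟨I.card + J.card - 1, by omega, by omega, subOpNorm_le_sCoef hU hI hJ (by omega)⟩
  · exact ⟨d, le_rfl, by omega, (subOpNorm_le_one hU I J).trans_eq (sCoef_self hU hd).symm⟩

theorem Wvec_apply (U : Matrix (Fin d) (Fin d) ℂ) (k : Fin d) :
    Wvec U k = sCoef U (k + 1) - sCoef U k := by
  rw [Wvec]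
  split_ifs with hk
  · rw [hk, sCoef_zero]
  · rfl

theorem sum_Wvec_castLE (U : Matrix (Fin d) (Fin d) ℂ) {m : ℕ} (h : m ≤ d) :
    ∑ i : Fin m, Wvec U (Fin.castLE h i) = sCoef U m := by
  simp only [Wvec_apply, Fin.val_castLE]
  rw [Fin.sum_univ_eq_sum_range (fun k => sCoef U (k + 1) - sCoef U k), Finset.sum_range_sub,
    sCoef_zero, sub_zero]

theorem sum_cons_Wvec_castLE (U : Matrix (Fin d) (Fin d) ℂ) {m : ℕ} (h : m + 1 ≤ d + 1) :
    ∑ i : Fin (m + 1), (Fin.cons 1 (Wvec U) : Fin (d + 1) → ℝ) (Fin.castLE h i) =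
      1 + sCoef U m := by
  rw [Fin.sum_univ_succ, ← sum_Wvec_castLE U (Nat.le_of_succ_le_succ h)]
  rfl

end sCoef

theorem majorizes_sumElim_cons_Wvec {d : ℕ} {U : Matrix (Fin d) (Fin d) ℂ}
    (hU : U ∈ unitaryGroup (Fin d) ℂ) (hd : 0 < d) {p q : Fin d → ℝ}
    (hp : ∑ i, p i = 1) (hq : ∑ j, q j = 1)
    (hpq : ∀ I J, ∑ i ∈ I, p i + ∑ j ∈ J, q j ≤ 1 + subOpNorm U I J) :
    Majorizes (Sum.elim p q) (Fin.cons 1 (Wvec U) : Fin (d + 1) → ℝ) := by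
  refine ⟨?_, fun A => ?_⟩
  · have h_total := sum_cons_Wvec_castLE U le_rfl
    simp only [Fin.castLE_refl] at h_total
    simp only [Fintype.sum_sum_type, Sum.elim_inl, Sum.elim_inr, hp, hq, h_total,
      sCoef_self hU hd]
  rcases A.eq_empty_or_nonempty with rfl | hA
  · exact ⟨∅, le_rfl, by simp⟩
  have h_card := Finset.card_toLeft_add_card_toRight (u := A)
  obtain ⟨m, hmd, hmA, hm⟩ :=
    exists_subOpNorm_le_sCoef hU hd A.toLeft A.toRight (h_card ▸ hA.card_pos)
  refine ⟨Finset.univ.map (Fin.castLEEmb (Nat.succ_le_succ hmd)), by simp; omega, ?_⟩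
  rw [Finset.sum_map, ← A.toLeft_disjSum_toRight, Finset.sum_disjSum]
  simp only [Fin.castLEEmb_apply, sum_cons_Wvec_castLE, Sum.elim_inl, Sum.elim_inr]
  linarith [hpq A.toLeft A.toRight]

/-- **Direct-sum majorization lemma**: the `2d`-dimensional vector `p ⊕ q` is majorized
by the `(d+1)`-dimensional vector `(1, s₁, s₂ - s₁, …, s_d - s_{d-1}) = (1) ⊕ W`. -/
theorem stmt_5 (d : ℕ) (hd : 2 ≤ d)
    (U : Matrix (Fin d) (Fin d) ℂ) (hU : U ∈ Matrix.unitaryGroup (Fin d) ℂ)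
    (ρ : Matrix (Fin d) (Fin d) ℂ) (hρ : ρ.PosSemidef) (hρtr : ρ.trace = 1)
    (p q : Fin d → ℝ)
    (hp : ∀ i, p i = (ρ i i).re)
    (hq : ∀ j, q j = ((Uᴴ * ρ * U) j j).re) :
    Majorizes (Sum.elim p q) (Fin.cons 1 (Wvec U) : Fin (d + 1) → ℝ) := by
  have h_trace_conj : (Uᴴ * ρ * U).trace = 1 := by
    rw [trace_mul_cycle, ← star_eq_conjTranspose, mem_unitaryGroup_iff.1 hU, Matrix.one_mul,
      hρtr]
  have hp_sum : ∑ i, p i = 1 := by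
    simp only [hp, ← Complex.re_sum]
    exact congrArg Complex.re hρtr
  have hq_sum : ∑ j, q j = 1 := by
    simp only [hq, ← Complex.re_sum]
    exact congrArg Complex.re h_trace_conj
  refine majorizes_sumElim_cons_Wvec hU (by omega) hp_sum hq_sum fun I J => ?_
  simpa only [hp, hq, hρtr, Complex.one_re, mul_one] using
    sum_re_diag_add_sum_re_diag_conj_le hU hρ I J
end

section
/- (Direct-sum majorization entropic uncertainty relation, Rényi case) For any density matrix ρ, any d×d unitary matrix U relating two orthonormal bases, the induced probability vectors p and q, and any α with 0 < α < 1, one has H_α(p) + H_α(q) ≥ H_α(W), where W = (s₁, s₂−s₁, …, s_d−s_{d−1}). -/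
/-!
For a vector `v` let `x` be its component on the coordinates `I` and `y = U P_J U† v` its
component on the span of the columns `J` of `U`. Then `‖x‖² + ‖y‖² = Re ⟪x + y, v⟫ ≤ ‖x + y‖ ‖v‖`,
while `|⟪x, y⟫| ≤ ‖U_{IJ}‖ ‖x‖ ‖y‖`; together they give
`∑_{i ∈ I} |v_i|² + ∑_{j ∈ J} |(U† v)_j|² ≤ (1 + ‖U_{IJ}‖) ‖v‖²`, and writing `ρ` as a sum of
rank-one matrices, `∑_{i ∈ I} p_i + ∑_{j ∈ J} q_j ≤ 1 + s_{|I| + |J| - 1}`.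
So any `m` entries of the concatenation `(p, q)` sum to at most the sum of the first `m` entries of
`(1, W)`, whose total is `1 + s_d ≤ 2`. Testing this on the entries that are `≥ u` gives
`min 1 u + ∑ₖ min (W k) u ≤ ∑ᵢ min (p i) u + ∑ⱼ min (q j) u` for every `u > 0`, and integrating
against `α (1 - α) u ^ (α - 2)` (which turns `min t u` into `t ^ α`) gives
`1 + ∑ W_k ^ α ≤ A + B` with `A = ∑ p_i ^ α ≥ 1`, `B = ∑ q_j ^ α ≥ 1`. Hence `∑ W_k ^ α ≤ A B`,
and taking logarithms gives the claim.
-/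

open scoped BigOperators Matrix ComplexConjugate ComplexOrder

/-- Rényi entropy of order `α ≠ 1` (natural logarithm). -/
noncomputable def renyiEntropy {n : Type*} [Fintype n] (α : ℝ) (x : n → ℝ) : ℝ :=
  (1 / (1 - α)) * Real.log (∑ i, x i ^ α)

open scoped InnerProductSpace
open Finset WithLp

namespace EntropicUncertainty

section InnerProductSpace

variable {𝕜 E : Type*} [RCLike 𝕜] [NormedAddCommGroup E] [InnerProductSpace 𝕜 E]

theorem norm_sq_add_norm_sq_le_of_re_inner_eq {v x y : E} {c : ℝ} (hc : 0 ≤ c)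
    (hx : RCLike.re ⟪x, v⟫_𝕜 = ‖x‖ ^ 2) (hy : RCLike.re ⟪y, v⟫_𝕜 = ‖y‖ ^ 2)
    (hxy : ‖⟪x, y⟫_𝕜‖ ≤ c * ‖x‖ * ‖y‖) :
    ‖x‖ ^ 2 + ‖y‖ ^ 2 ≤ (1 + c) * ‖v‖ ^ 2 := by
  set S := ‖x‖ ^ 2 + ‖y‖ ^ 2
  have hS : S ≤ ‖x + y‖ * ‖v‖ :=
    calc S = RCLike.re ⟪x + y, v⟫_𝕜 := by rw [inner_add_left, map_add, hx, hy]
      _ ≤ ‖⟪x + y, v⟫_𝕜‖ := RCLike.re_le_norm _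
      _ ≤ ‖x + y‖ * ‖v‖ := norm_inner_le_norm _ _
  -- `2 ‖x‖ ‖y‖ ≤ S` turns the bound on `⟪x, y⟫` into `‖x + y‖² ≤ (1 + c) S`.
  have hxy2 : ‖x + y‖ ^ 2 ≤ (1 + c) * S := by
    have := (RCLike.re_le_norm ⟪x, y⟫_𝕜).trans hxy
    rw [@norm_add_sq 𝕜]
    nlinarith [sq_nonneg (‖x‖ - ‖y‖)]
  have hS0 : 0 ≤ S := by positivity
  have hSS : S ^ 2 ≤ (1 + c) * S * ‖v‖ ^ 2 :=
    calc S ^ 2 ≤ (‖x + y‖ * ‖v‖) ^ 2 := pow_le_pow_left₀ hS0 hS 2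
      _ = ‖x + y‖ ^ 2 * ‖v‖ ^ 2 := mul_pow _ _ _
      _ ≤ (1 + c) * S * ‖v‖ ^ 2 := by gcongr
  rcases hS0.eq_or_lt with h | h
  · rw [← h]; positivity
  · nlinarith

end InnerProductSpace

section VectorsAndMatrices

theorem eq_zero_of_sum_norm_sq_eq_zero {ι : Type*} {s : Finset ι} {z : ι → ℂ}
    (hz : ∑ i ∈ s, ‖z i‖ ^ 2 = 0) {i : ι} (hi : i ∈ s) : z i = 0 := by
  simpa using (sum_eq_zero_iff_of_nonneg fun k _ => sq_nonneg ‖z k‖).1 hz i hi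

theorem re_vecMulVec_star_self_apply {ι : Type*} (a : ι → ℂ) (i : ι) :
    (Matrix.vecMulVec a (star a) i i).re = ‖a i‖ ^ 2 := by
  rw [Matrix.vecMulVec_apply, Pi.star_apply, RCLike.star_def, Complex.mul_conj,
    Complex.normSq_eq_norm_sq, Complex.ofReal_re]

theorem re_diag_nonneg {ι : Type*} {A : Matrix ι ι ℂ} (hA : A.PosSemidef) (i : ι) :
    0 ≤ (A i i).re :=
  (Complex.nonneg_iff.1 hA.diag_nonneg).1

variable {ι : Type*} [Fintype ι]

theorem norm_toLp_indicator (s : Finset ι) (z : ι → ℂ) :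
    ‖(toLp 2 ((s : Set ι).indicator z) : EuclideanSpace ℂ ι)‖ =
      √(∑ i ∈ s, ‖z i‖ ^ 2) := by
  rw [EuclideanSpace.norm_eq]
  exact congrArg _ (sum_indicator_subset_of_eq_zero z (fun _ c => ‖c‖ ^ 2) (subset_univ s)
    fun _ => by simp)

theorem inner_toLp_indicator_left (s : Finset ι) (z : ι → ℂ) :
    ⟪(toLp 2 ((s : Set ι).indicator z) : EuclideanSpace ℂ ι), toLp 2 z⟫_ℂ =
      ⟪(toLp 2 ((s : Set ι).indicator z) : EuclideanSpace ℂ ι),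
        toLp 2 ((s : Set ι).indicator z)⟫_ℂ := by
  simp only [EuclideanSpace.inner_toLp_toLp, dotProduct]
  refine sum_congr rfl fun i _ => ?_
  by_cases hi : i ∈ (s : Set ι) <;> simp [hi]

theorem inner_toLp_mulVec_left (A : Matrix ι ι ℂ) (x y : ι → ℂ) :
    ⟪(toLp 2 (A *ᵥ x) : EuclideanSpace ℂ ι), toLp 2 y⟫_ℂ =
      ⟪(toLp 2 x : EuclideanSpace ℂ ι), toLp 2 (Aᴴ *ᵥ y)⟫_ℂ := by
  rw [EuclideanSpace.inner_toLp_toLp, EuclideanSpace.inner_toLp_toLp, Matrix.star_mulVec,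
    dotProduct_comm, ← Matrix.dotProduct_mulVec, dotProduct_comm]

theorem norm_toLp_mulVec_of_mem_unitaryGroup [DecidableEq ι] {U : Matrix ι ι ℂ}
    (hU : U ∈ Matrix.unitaryGroup ι ℂ) (z : ι → ℂ) :
    ‖(toLp 2 (U *ᵥ z) : EuclideanSpace ℂ ι)‖ = ‖(toLp 2 z : EuclideanSpace ℂ ι)‖ := by
  rw [norm_eq_sqrt_re_inner (𝕜 := ℂ), norm_eq_sqrt_re_inner (𝕜 := ℂ), inner_toLp_mulVec_left,
    Matrix.mulVec_mulVec, ← Matrix.star_eq_conjTranspose, Unitary.star_mul_self_of_mem hU,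
    Matrix.one_mulVec]

theorem conjTranspose_mul_vecMulVec_mul (U : Matrix ι ι ℂ) (a : ι → ℂ) :
    Uᴴ * Matrix.vecMulVec a (star a) * U = Matrix.vecMulVec (Uᴴ *ᵥ a) (star (Uᴴ *ᵥ a)) := by
  rw [Matrix.mul_vecMulVec, Matrix.vecMulVec_mul, Matrix.star_mulVec,
    Matrix.conjTranspose_conjTranspose]

theorem sum_re_diag_eq_one {A : Matrix ι ι ℂ} (hA : A.trace = 1) :
    ∑ i, (A i i).re = 1 := by
  simpa [Matrix.trace] using congrArg Complex.re hA

end VectorsAndMatrices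

section SubmatrixNorm

variable {d : ℕ}

noncomputable def blockForm (U : Matrix (Fin d) (Fin d) ℂ) (I J : Finset (Fin d))
    (v w : Fin d → ℂ) : ℂ :=
  ∑ i ∈ I, ∑ j ∈ J, conj (v i) * U i j * w j

variable (U : Matrix (Fin d) (Fin d) ℂ) (I J : Finset (Fin d))

theorem blockForm_eq_inner (v w : Fin d → ℂ) :
    blockForm U I J v w = ⟪(toLp 2 ((I : Set (Fin d)).indicator v) : EuclideanSpace ℂ (Fin d)),
      toLp 2 (U *ᵥ (J : Set (Fin d)).indicator w)⟫_ℂ := by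
  rw [EuclideanSpace.inner_toLp_toLp, blockForm, dotProduct, ← sum_indicator_subset_of_eq_zero v
    (fun i z => ∑ j ∈ J, conj z * U i j * w j) (subset_univ I) fun _ => by simp]
  refine sum_congr rfl fun i _ => ?_
  rw [Matrix.mulVec, dotProduct, sum_mul, ← sum_indicator_subset_of_eq_zero w
    (fun j z => conj ((I : Set (Fin d)).indicator v i) * U i j * z) (subset_univ J)
    fun _ => mul_zero _]
  refine sum_congr rfl fun j _ => ?_
  simp only [Pi.star_apply, RCLike.star_def]
  ring

theorem blockForm_smul (a b : ℝ) (v w : Fin d → ℂ) :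
    blockForm U I J (a • v) (b • w) = (a * b : ℂ) * blockForm U I J v w := by
  simp only [blockForm, mul_sum, Pi.smul_apply, Complex.real_smul, map_mul, Complex.conj_ofReal]
  exact sum_congr rfl fun i _ => sum_congr rfl fun j _ => by ring

theorem subOpNorm_nonneg : 0 ≤ subOpNorm U I J :=
  Real.sSup_nonneg fun _ ⟨_, _, _, _, hr⟩ => hr ▸ norm_nonneg _

theorem mem_upperBounds_subOpNorm_set {c : ℝ}
    (h : ∀ v w : Fin d → ℂ, ∑ i ∈ I, ‖v i‖ ^ 2 = 1 → ∑ j ∈ J, ‖w j‖ ^ 2 = 1 →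
      ‖blockForm U I J v w‖ ≤ c) :
    c ∈ upperBounds { r : ℝ | ∃ (x : I → ℂ) (y : J → ℂ), (∑ i, ‖x i‖ ^ 2 = 1) ∧
      (∑ j, ‖y j‖ ^ 2 = 1) ∧ r = ‖∑ i : I, ∑ j : J, (starRingEnd ℂ) (x i) * U i.1 j.1 * y j‖ } := by
  rintro r ⟨x, y, hx, hy, rfl⟩
  let v : Fin d → ℂ := fun i => if h : i ∈ I then x ⟨i, h⟩ else 0
  let w : Fin d → ℂ := fun j => if h : j ∈ J then y ⟨j, h⟩ else 0
  have := h v w (by simpa [v, ← sum_coe_sort I] using hx) (by simpa [w, ← sum_coe_sort J] using hy)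
  simpa [blockForm, v, w, ← sum_coe_sort I, ← sum_coe_sort J] using this

theorem subOpNorm_le_of_forall_blockForm_le {c : ℝ} (hc : 0 ≤ c)
    (h : ∀ v w : Fin d → ℂ, ∑ i ∈ I, ‖v i‖ ^ 2 = 1 → ∑ j ∈ J, ‖w j‖ ^ 2 = 1 →
      ‖blockForm U I J v w‖ ≤ c) :
    subOpNorm U I J ≤ c :=
  Real.sSup_le (mem_upperBounds_subOpNorm_set U I J h) hc

theorem norm_blockForm_le_sum_norm {v w : Fin d → ℂ} (hv : ∑ i ∈ I, ‖v i‖ ^ 2 = 1)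
    (hw : ∑ j ∈ J, ‖w j‖ ^ 2 = 1) :
    ‖blockForm U I J v w‖ ≤ ∑ i ∈ I, ∑ j ∈ J, ‖U i j‖ := by
  have le_one {s : Finset (Fin d)} {z : Fin d → ℂ} (hz : ∑ i ∈ s, ‖z i‖ ^ 2 = 1) {i : Fin d}
      (hi : i ∈ s) : ‖z i‖ ≤ 1 := by
    have := hz ▸ single_le_sum (fun k _ => sq_nonneg ‖z k‖) hi
    nlinarith [norm_nonneg (z i)]
  refine (norm_sum_le _ _).trans (sum_le_sum fun i hi => (norm_sum_le _ _).trans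
    (sum_le_sum fun j hj => ?_))
  rw [norm_mul, norm_mul, RCLike.norm_conj]
  calc ‖v i‖ * ‖U i j‖ * ‖w j‖ ≤ 1 * ‖U i j‖ * 1 := by
        gcongr
        exacts [le_one hv hi, le_one hw hj]
    _ = ‖U i j‖ := by ring

theorem bddAbove_subOpNorm_set :
    BddAbove { r : ℝ | ∃ (x : I → ℂ) (y : J → ℂ), (∑ i, ‖x i‖ ^ 2 = 1) ∧
      (∑ j, ‖y j‖ ^ 2 = 1) ∧ r = ‖∑ i : I, ∑ j : J, (starRingEnd ℂ) (x i) * U i.1 j.1 * y j‖ } :=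
  ⟨_, mem_upperBounds_subOpNorm_set U I J fun _ _ => norm_blockForm_le_sum_norm U I J⟩

theorem norm_blockForm_le_subOpNorm {v w : Fin d → ℂ} (hv : ∑ i ∈ I, ‖v i‖ ^ 2 = 1)
    (hw : ∑ j ∈ J, ‖w j‖ ^ 2 = 1) : ‖blockForm U I J v w‖ ≤ subOpNorm U I J :=
  le_csSup (bddAbove_subOpNorm_set U I J) ⟨fun i => v i, fun j => w j,
    (sum_coe_sort I fun i => ‖v i‖ ^ 2).trans hv, (sum_coe_sort J fun j => ‖w j‖ ^ 2).trans hw, by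
      rw [blockForm, ← sum_coe_sort I]
      simp only [← sum_coe_sort J]⟩

theorem norm_blockForm_le (v w : Fin d → ℂ) :
    ‖blockForm U I J v w‖ ≤
      subOpNorm U I J * √(∑ i ∈ I, ‖v i‖ ^ 2) * √(∑ j ∈ J, ‖w j‖ ^ 2) := by
  have hs := subOpNorm_nonneg U I J
  rcases (sum_nonneg fun i _ => sq_nonneg ‖v i‖ : 0 ≤ ∑ i ∈ I, ‖v i‖ ^ 2).eq_or_lt with hA | hA
  · have : blockForm U I J v w = 0 := sum_eq_zero fun i hi => by
      simp [eq_zero_of_sum_norm_sq_eq_zero hA.symm hi]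
    rw [this, norm_zero]
    positivity
  rcases (sum_nonneg fun j _ => sq_nonneg ‖w j‖ : 0 ≤ ∑ j ∈ J, ‖w j‖ ^ 2).eq_or_lt with hB | hB
  · have : blockForm U I J v w = 0 := sum_eq_zero fun i _ => sum_eq_zero fun j hj => by
      simp [eq_zero_of_sum_norm_sq_eq_zero hB.symm hj]
    rw [this, norm_zero]
    positivity
  have unit {s : Finset (Fin d)} {z : Fin d → ℂ} (hz : 0 < ∑ i ∈ s, ‖z i‖ ^ 2) :
      ∑ i ∈ s, ‖((√(∑ i ∈ s, ‖z i‖ ^ 2))⁻¹ • z) i‖ ^ 2 = 1 := by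
    simp only [Pi.smul_apply, norm_smul, mul_pow, ← mul_sum, Real.norm_eq_abs, abs_inv, inv_pow,
      Real.sq_sqrt hz.le, abs_of_nonneg (Real.sqrt_nonneg _)]
    exact inv_mul_cancel₀ hz.ne'
  have := norm_blockForm_le_subOpNorm U I J (unit hA) (unit hB)
  rw [blockForm_smul, norm_mul, ← Complex.ofReal_mul, Complex.norm_real, Real.norm_eq_abs,
    abs_of_nonneg (by positivity), ← mul_inv, inv_mul_le_iff₀ (by positivity)] at this
  linarith

theorem subOpNorm_mono {I' J' : Finset (Fin d)} (hI : I ⊆ I') (hJ : J ⊆ J') :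
    subOpNorm U I J ≤ subOpNorm U I' J' := by
  refine subOpNorm_le_of_forall_blockForm_le U I J (subOpNorm_nonneg U I' J') fun v w hv hw => ?_
  have hform : blockForm U I J v w =
      blockForm U I' J' ((I : Set (Fin d)).indicator v) ((J : Set (Fin d)).indicator w) := by
    rw [blockForm, blockForm, ← sum_indicator_subset_of_eq_zero v
      (fun i z => ∑ j ∈ J, conj z * U i j * w j) hI fun _ => by simp]
    exact sum_congr rfl fun i _ => (sum_indicator_subset_of_eq_zero w
      (fun j z => conj ((I : Set (Fin d)).indicator v i) * U i j * z) hJ fun _ => mul_zero _).symm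
  have hnorm {s t : Finset (Fin d)} (hst : s ⊆ t) (z : Fin d → ℂ) :
      ∑ i ∈ t, ‖(s : Set (Fin d)).indicator z i‖ ^ 2 = ∑ i ∈ s, ‖z i‖ ^ 2 :=
    sum_indicator_subset_of_eq_zero z (fun _ c => ‖c‖ ^ 2) hst fun _ => by simp
  simpa [hform, hnorm hI, hnorm hJ, hv, hw] using
    norm_blockForm_le U I' J' ((I : Set (Fin d)).indicator v) ((J : Set (Fin d)).indicator w)

theorem sCoef_nonneg (k : ℕ) : 0 ≤ sCoef U k :=
  Real.sSup_nonneg fun _ ⟨I, J, _, _, _, hr⟩ => hr ▸ subOpNorm_nonneg U I J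

theorem sCoef_zero : sCoef U 0 = 0 := by
  refine (congrArg sSup (Set.eq_empty_iff_forall_notMem.2 ?_)).trans Real.sSup_empty
  rintro _ ⟨I, J, hI, hJ, hcard, -⟩
  have := hI.card_pos
  have := hJ.card_pos
  omega

theorem bddAbove_sCoef_set (k : ℕ) :
    BddAbove { r : ℝ | ∃ I J : Finset (Fin d), I.Nonempty ∧ J.Nonempty ∧
      I.card + J.card = k + 1 ∧ r = subOpNorm U I J } :=
  ((Set.finite_range fun IJ : Finset (Fin d) × Finset (Fin d) => subOpNorm U IJ.1 IJ.2).subset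
    (by rintro _ ⟨I, J, -, -, -, rfl⟩; exact ⟨(I, J), rfl⟩)).bddAbove

theorem subOpNorm_le_sCoef (h : 0 < #I + #J) : subOpNorm U I J ≤ sCoef U (#I + #J - 1) := by
  rcases I.eq_empty_or_nonempty with rfl | hI
  · exact subOpNorm_le_of_forall_blockForm_le U ∅ J (sCoef_nonneg U _) fun _ _ hv _ => by
      simp at hv
  rcases J.eq_empty_or_nonempty with rfl | hJ
  · exact subOpNorm_le_of_forall_blockForm_le U I ∅ (sCoef_nonneg U _) fun _ _ _ hw => by
      simp at hw
  exact le_csSup (bddAbove_sCoef_set U _) ⟨I, J, hI, hJ, by omega, rfl⟩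

theorem sCoef_le_sCoef_succ {k : ℕ} (hk : k + 2 ≤ 2 * d) : sCoef U k ≤ sCoef U (k + 1) := by
  refine Real.sSup_le ?_ (sCoef_nonneg U _)
  rintro _ ⟨I, J, hI, hJ, hcard, rfl⟩
  have enlarge {I' J' : Finset (Fin d)} (hI' : I ⊆ I') (hJ' : J ⊆ J')
      (hc : #I' + #J' = k + 2) : subOpNorm U I J ≤ sCoef U (k + 1) :=
    (subOpNorm_mono U I J hI' hJ').trans
      (le_csSup (bddAbove_sCoef_set U _) ⟨I', J', hI.mono hI', hJ.mono hJ', hc, rfl⟩)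
  have missing {s : Finset (Fin d)} (hs : #s < d) : ∃ a, a ∉ s := by
    obtain ⟨a, -, ha⟩ := exists_mem_notMem_of_card_lt_card
      (show #s < #(univ : Finset (Fin d)) by rwa [card_univ, Fintype.card_fin])
    exact ⟨a, ha⟩
  by_cases h : #I < d
  · obtain ⟨a, ha⟩ := missing h
    exact enlarge (subset_insert a I) subset_rfl (by rw [card_insert_of_notMem ha]; omega)
  · have hIu : #I ≤ d := by simpa using card_le_univ I
    obtain ⟨a, ha⟩ := missing (s := J) (by omega)
    exact enlarge subset_rfl (subset_insert a J) (by rw [card_insert_of_notMem ha]; omega)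

end SubmatrixNorm

section Unitary

variable {d : ℕ} {U : Matrix (Fin d) (Fin d) ℂ}

theorem subOpNorm_le_one (hU : U ∈ Matrix.unitaryGroup (Fin d) ℂ) (I J : Finset (Fin d)) :
    subOpNorm U I J ≤ 1 := by
  refine subOpNorm_le_of_forall_blockForm_le U I J zero_le_one fun v w hv hw => ?_
  rw [blockForm_eq_inner]
  refine (norm_inner_le_norm _ _).trans_eq ?_
  rw [norm_toLp_mulVec_of_mem_unitaryGroup hU, norm_toLp_indicator, norm_toLp_indicator, hv, hw,
    Real.sqrt_one, one_mul]

theorem sCoef_le_one (hU : U ∈ Matrix.unitaryGroup (Fin d) ℂ) (k : ℕ) : sCoef U k ≤ 1 :=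
  Real.sSup_le (fun _ ⟨I, J, _, _, _, hr⟩ => hr ▸ subOpNorm_le_one hU I J) zero_le_one

theorem sum_norm_sq_add_sum_norm_sq_conjTranspose_mulVec_le
    (hU : U ∈ Matrix.unitaryGroup (Fin d) ℂ) (I J : Finset (Fin d)) (v : Fin d → ℂ) :
    ∑ i ∈ I, ‖v i‖ ^ 2 + ∑ j ∈ J, ‖(Uᴴ *ᵥ v) j‖ ^ 2 ≤ (1 + subOpNorm U I J) * ∑ i, ‖v i‖ ^ 2 := by
  set w := Uᴴ *ᵥ v
  let x : EuclideanSpace ℂ (Fin d) := toLp 2 ((I : Set (Fin d)).indicator v)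
  let y : EuclideanSpace ℂ (Fin d) := toLp 2 (U *ᵥ (J : Set (Fin d)).indicator w)
  have hx : ‖x‖ = √(∑ i ∈ I, ‖v i‖ ^ 2) := norm_toLp_indicator I v
  have hy : ‖y‖ = √(∑ j ∈ J, ‖w j‖ ^ 2) :=
    (norm_toLp_mulVec_of_mem_unitaryGroup hU _).trans (norm_toLp_indicator J w)
  have key := norm_sq_add_norm_sq_le_of_re_inner_eq (v := toLp 2 v) (x := x) (y := y)
    (subOpNorm_nonneg U I J)
    (by rw [inner_toLp_indicator_left, inner_self_eq_norm_sq])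
    (by rw [inner_toLp_mulVec_left, inner_toLp_indicator_left, inner_self_eq_norm_sq,
      ← norm_toLp_mulVec_of_mem_unitaryGroup hU])
    (by rw [← blockForm_eq_inner, hx, hy]; exact norm_blockForm_le U I J v w)
  rwa [hx, hy, EuclideanSpace.norm_eq, Real.sq_sqrt (by positivity), Real.sq_sqrt (by positivity),
    Real.sq_sqrt (by positivity)] at key

theorem sum_re_diag_add_sum_re_diag_le (hU : U ∈ Matrix.unitaryGroup (Fin d) ℂ)
    {ρ : Matrix (Fin d) (Fin d) ℂ} (hρ : ρ.PosSemidef) (I J : Finset (Fin d)) :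
    ∑ i ∈ I, (ρ i i).re + ∑ j ∈ J, ((Uᴴ * ρ * U) j j).re ≤
      (1 + subOpNorm U I J) * ρ.trace.re := by
  obtain ⟨n, v, rfl⟩ := Matrix.posSemidef_iff_eq_sum_vecMulVec.1 hρ
  simp only [mul_sum, sum_mul, Matrix.sum_apply, Complex.re_sum, conjTranspose_mul_vecMulVec_mul,
    re_vecMulVec_star_self_apply, Matrix.trace, Matrix.diag_apply]
  calc _ = ∑ m, (∑ i ∈ I, ‖v m i‖ ^ 2 + ∑ j ∈ J, ‖(Uᴴ *ᵥ v m) j‖ ^ 2) := by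
        rw [sum_add_distrib]; congr 1 <;> exact sum_comm
    _ ≤ ∑ m, (1 + subOpNorm U I J) * ∑ i, ‖v m i‖ ^ 2 := sum_le_sum fun m _ =>
        sum_norm_sq_add_sum_norm_sq_conjTranspose_mulVec_le hU I J (v m)
    _ = _ := by simp only [mul_sum]; exact sum_comm

theorem trace_conjTranspose_mul_mul (hU : U ∈ Matrix.unitaryGroup (Fin d) ℂ)
    (ρ : Matrix (Fin d) (Fin d) ℂ) : (Uᴴ * ρ * U).trace = ρ.trace := by
  rw [Matrix.trace_mul_cycle, ← Matrix.star_eq_conjTranspose, Unitary.mul_star_self_of_mem hU,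
    one_mul]

end Unitary

section Majorization

open Set MeasureTheory

theorem sum_min_le_sum_min {ι : Type*} [Fintype ι] {x : ι → ℝ} (hx : ∀ i, 0 ≤ x i)
    {g : ℕ → ℝ} {n : ℕ} (hsub : ∀ s : Finset ι, ∑ i ∈ s, x i ≤ g #s) (htot : g n ≤ ∑ i, x i)
    {u : ℝ} (hu : 0 ≤ u) :
    ∑ k ∈ range n, min (g (k + 1) - g k) u ≤ ∑ i, min (x i) u := by
  classical
  set s := univ.filter fun i => u ≤ x i
  have hx_split := sum_filter_add_sum_filter_not univ (fun i => u ≤ x i) x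
  have hrhs : ∑ i, min (x i) u = #s * u + ∑ i ∈ univ.filter (fun i => ¬u ≤ x i), x i := by
    rw [← sum_filter_add_sum_filter_not univ (fun i => u ≤ x i),
      sum_congr rfl fun i hi => min_eq_right (mem_filter.1 hi).2, sum_const, nsmul_eq_mul,
      sum_congr rfl fun i hi => min_eq_left (not_le.1 (mem_filter.1 hi).2).le]
  have hrest : 0 ≤ ∑ i ∈ univ.filter (fun i => ¬u ≤ x i), x i := sum_nonneg fun i _ => hx i
  have hmin_u (m : ℕ) : ∑ k ∈ range m, min (g (k + 1) - g k) u ≤ m * u := by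
    simpa using sum_le_sum fun k (_ : k ∈ range m) => min_le_right (g (k + 1) - g k) u
  rw [hrhs]
  rcases le_or_gt #s n with hsn | hns
  · have htail : ∑ k ∈ Ico #s n, min (g (k + 1) - g k) u ≤ g n - g #s :=
      (sum_le_sum fun k _ => min_le_left _ _).trans_eq (sum_Ico_sub g hsn)
    rw [← sum_range_add_sum_Ico _ hsn]
    linarith [hmin_u #s, hsub s]
  · have : (n : ℝ) * u ≤ #s * u := by gcongr
    linarith [hmin_u n]

variable {α t : ℝ}

theorem min_mul_rpow_eqOn_Ioc :
    EqOn (fun u => min t u * u ^ (α - 2)) (fun u => u ^ (α - 1)) (Ioc 0 t) := fun u hu => by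
  simp only [min_eq_right hu.2]
  rw [show α - 1 = 1 + (α - 2) by ring, Real.rpow_add hu.1, Real.rpow_one]

theorem min_mul_rpow_eqOn_Ioi :
    EqOn (fun u => min t u * u ^ (α - 2)) (fun u => t * u ^ (α - 2)) (Ioi t) := fun u hu => by
  simp only [min_eq_left (le_of_lt (mem_Ioi.1 hu))]

theorem integrableOn_Ioc_min_mul_rpow (hα0 : 0 < α) (ht : 0 ≤ t) :
    IntegrableOn (fun u => min t u * u ^ (α - 2)) (Ioc 0 t) := by
  refine (integrableOn_congr_fun min_mul_rpow_eqOn_Ioc measurableSet_Ioc).2 ?_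
  have := intervalIntegral.intervalIntegrable_rpow' (a := 0) (b := t)
    (show (-1 : ℝ) < α - 1 by linarith)
  rwa [intervalIntegrable_iff, uIoc_of_le ht] at this

theorem integrableOn_Ioi_min_mul_rpow (hα1 : α < 1) (ht : 0 < t) :
    IntegrableOn (fun u => min t u * u ^ (α - 2)) (Ioi t) :=
  (integrableOn_congr_fun min_mul_rpow_eqOn_Ioi measurableSet_Ioi).2
    ((integrableOn_Ioi_rpow_of_lt (by linarith) ht).const_mul t)

theorem integrableOn_min_mul_rpow (hα0 : 0 < α) (hα1 : α < 1) (ht : 0 ≤ t) :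
    IntegrableOn (fun u => min t u * u ^ (α - 2)) (Ioi 0) := by
  rcases ht.eq_or_lt with rfl | ht
  · exact (integrableOn_congr_fun min_mul_rpow_eqOn_Ioi measurableSet_Ioi).2 (by simp)
  rw [← Ioc_union_Ioi_eq_Ioi ht.le]
  exact (integrableOn_Ioc_min_mul_rpow hα0 ht.le).union (integrableOn_Ioi_min_mul_rpow hα1 ht)

theorem integral_min_mul_rpow (hα0 : 0 < α) (hα1 : α < 1) (ht : 0 ≤ t) :
    ∫ u in Ioi 0, min t u * u ^ (α - 2) = t ^ α / (α * (1 - α)) := by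
  rcases ht.eq_or_lt with rfl | ht
  · rw [setIntegral_congr_fun measurableSet_Ioi min_mul_rpow_eqOn_Ioi, Real.zero_rpow hα0.ne']
    simp
  rw [← Ioc_union_Ioi_eq_Ioi ht.le, setIntegral_union (Ioc_disjoint_Ioi le_rfl) measurableSet_Ioi
    (integrableOn_Ioc_min_mul_rpow hα0 ht.le) (integrableOn_Ioi_min_mul_rpow hα1 ht),
    setIntegral_congr_fun measurableSet_Ioc min_mul_rpow_eqOn_Ioc,
    setIntegral_congr_fun measurableSet_Ioi min_mul_rpow_eqOn_Ioi,
    ← intervalIntegral.integral_of_le ht.le, integral_rpow (Or.inl (by linarith)),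
    integral_const_mul, integral_Ioi_rpow_of_lt (by linarith) ht]
  have ht' : t * t ^ (α - 1) = t ^ α := by
    rw [← Real.rpow_one_add' ht.le (by linarith)]; ring_nf
  rw [show α - 1 + 1 = α by ring, show α - 2 + 1 = α - 1 by ring, Real.zero_rpow hα0.ne',
    mul_div_assoc', mul_neg, ht']
  have : α - 1 ≠ 0 := by linarith
  have : 1 - α ≠ 0 := by linarith
  field_simp
  ring

theorem sum_rpow_eq_integral {ι : Type*} (s : Finset ι) {x : ι → ℝ} (hx : ∀ i ∈ s, 0 ≤ x i)
    (hα0 : 0 < α) (hα1 : α < 1) :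
    ∑ i ∈ s, x i ^ α = α * (1 - α) * ∫ u in Ioi 0, ∑ i ∈ s, min (x i) u * u ^ (α - 2) := by
  rw [integral_finsetSum s fun i hi => integrableOn_min_mul_rpow hα0 hα1 (hx i hi), mul_sum]
  refine sum_congr rfl fun i hi => ?_
  rw [integral_min_mul_rpow hα0 hα1 (hx i hi), mul_div_cancel₀]
  exact (mul_pos hα0 (by linarith)).ne'

theorem sum_rpow_le_sum_rpow_of_sum_min_le {ι κ : Type*} {s : Finset κ} {t : Finset ι}
    {y : κ → ℝ} {x : ι → ℝ} (hy : ∀ k ∈ s, 0 ≤ y k) (hx : ∀ i ∈ t, 0 ≤ x i)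
    (hα0 : 0 < α) (hα1 : α < 1)
    (h : ∀ u, 0 < u → ∑ k ∈ s, min (y k) u ≤ ∑ i ∈ t, min (x i) u) :
    ∑ k ∈ s, y k ^ α ≤ ∑ i ∈ t, x i ^ α := by
  rw [sum_rpow_eq_integral s hy hα0 hα1, sum_rpow_eq_integral t hx hα0 hα1]
  refine mul_le_mul_of_nonneg_left (setIntegral_mono_on
    (integrable_finsetSum _ fun k hk => integrableOn_min_mul_rpow hα0 hα1 (hy k hk))
    (integrable_finsetSum _ fun i hi => integrableOn_min_mul_rpow hα0 hα1 (hx i hi))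
    measurableSet_Ioi fun u hu => ?_) (mul_pos hα0 (by linarith)).le
  rw [← sum_mul, ← sum_mul]
  exact mul_le_mul_of_nonneg_right (h u hu) (Real.rpow_nonneg (le_of_lt hu) _)

end Majorization

section Renyi

theorem one_le_sum_rpow {ι : Type*} [Fintype ι] {p : ι → ℝ} (hp0 : ∀ i, 0 ≤ p i)
    (hp1 : ∑ i, p i = 1) {α : ℝ} (hα : α ≤ 1) : 1 ≤ ∑ i, p i ^ α :=
  hp1 ▸ sum_le_sum fun i _ => Real.self_le_rpow_of_le_one (hp0 i)
    (hp1 ▸ single_le_sum (fun j _ => hp0 j) (mem_univ i)) hα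

theorem renyiEntropy_le_add_of_one_add_sum_rpow_le {ι ι' κ : Type*} [Fintype ι] [Fintype ι']
    [Fintype κ] {p : ι → ℝ} {q : ι' → ℝ} {w : κ → ℝ} (hp0 : ∀ i, 0 ≤ p i) (hp1 : ∑ i, p i = 1)
    (hq0 : ∀ j, 0 ≤ q j) (hq1 : ∑ j, q j = 1) (hw : ∀ k, 0 ≤ w k) {α : ℝ} (hα1 : α < 1)
    (h : 1 + ∑ k, w k ^ α ≤ ∑ i, p i ^ α + ∑ j, q j ^ α) :
    renyiEntropy α w ≤ renyiEntropy α p + renyiEntropy α q := by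
  have hA := one_le_sum_rpow hp0 hp1 hα1.le
  have hB := one_le_sum_rpow hq0 hq1 hα1.le
  -- For the power sums `A`, `B`, `C` of `p`, `q`, `w`: `(A - 1) (B - 1) ≥ 0` upgrades
  -- `C ≤ A + B - 1` to `C ≤ A B`.
  have hC : ∑ k, w k ^ α ≤ (∑ i, p i ^ α) * ∑ j, q j ^ α := by nlinarith
  unfold renyiEntropy
  rw [← mul_add, ← Real.log_mul (by positivity) (by positivity)]
  refine mul_le_mul_of_nonneg_left ?_ (one_div_nonneg.2 (by linarith))
  rcases (sum_nonneg fun k _ => Real.rpow_nonneg (hw k) α : 0 ≤ ∑ k, w k ^ α).eq_or_lt with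
    h0 | h0
  · rw [← h0, Real.log_zero]
    exact Real.log_nonneg (by nlinarith)
  · exact Real.log_le_log h0 hC

end Renyi

section UncertaintyRelation

variable {d : ℕ}

/-- The partial sums `0, 1, 1 + s₁, …, 1 + s_d` of the vector `(1, W₁, …, W_d)`. -/
noncomputable def sPartialSum (U : Matrix (Fin d) (Fin d) ℂ) : ℕ → ℝ
  | 0 => 0
  | k + 1 => 1 + sCoef U k

theorem Wvec_eq (U : Matrix (Fin d) (Fin d) ℂ) (k : Fin d) :
    Wvec U k = sCoef U (k + 1) - sCoef U k := by
  by_cases hk : k.val = 0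
  · simp [Wvec, hk, sCoef_zero]
  · simp [Wvec, hk]

theorem Wvec_nonneg (U : Matrix (Fin d) (Fin d) ℂ) (k : Fin d) : 0 ≤ Wvec U k := by
  rw [Wvec_eq, sub_nonneg]
  exact sCoef_le_sCoef_succ U (by omega)

theorem sum_sPartialSum_sub_rpow (U : Matrix (Fin d) (Fin d) ℂ) {α : ℝ} :
    ∑ k ∈ range (d + 1), (sPartialSum U (k + 1) - sPartialSum U k) ^ α =
      1 + ∑ k, Wvec U k ^ α := by
  rw [sum_range_succ', add_comm]
  simp [sPartialSum, sCoef_zero, Wvec_eq,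
    Fin.sum_univ_eq_sum_range (fun k => (sCoef U (k + 1) - sCoef U k) ^ α)]

theorem sPartialSum_le_sPartialSum_succ (U : Matrix (Fin d) (Fin d) ℂ) {k : ℕ} (hk : k ≤ d) :
    sPartialSum U k ≤ sPartialSum U (k + 1) := by
  rcases k with _ | k
  · simp [sPartialSum, sCoef_zero]
  · simpa [sPartialSum] using sCoef_le_sCoef_succ U (by omega)

variable {U ρ : Matrix (Fin d) (Fin d) ℂ}

theorem sum_diag_le_sPartialSum (hU : U ∈ Matrix.unitaryGroup (Fin d) ℂ) (hρ : ρ.PosSemidef)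
    (hρtr : ρ.trace = 1) (S : Finset (Fin d ⊕ Fin d)) :
    ∑ x ∈ S, Sum.elim (fun i => (ρ i i).re) (fun j => ((Uᴴ * ρ * U) j j).re) x ≤
      sPartialSum U #S := by
  rw [← toLeft_disjSum_toRight (u := S), sum_disjSum, card_disjSum]
  simp only [Sum.elim_inl, Sum.elim_inr]
  rcases Nat.eq_zero_or_pos (#S.toLeft + #S.toRight) with h | h
  · rw [card_eq_zero.1 (Nat.eq_zero_of_add_eq_zero_right h),
      card_eq_zero.1 (Nat.eq_zero_of_add_eq_zero_left h)]
    simp [sPartialSum]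
  obtain ⟨k, hk⟩ := Nat.exists_eq_add_one_of_ne_zero h.ne'
  have hdiag := sum_re_diag_add_sum_re_diag_le hU hρ S.toLeft S.toRight
  have hs := subOpNorm_le_sCoef U S.toLeft S.toRight h
  rw [hρtr, Complex.one_re, mul_one] at hdiag
  rw [hk, Nat.add_sub_cancel] at hs
  rw [hk, sPartialSum]
  linarith

theorem one_add_sum_Wvec_rpow_le (hU : U ∈ Matrix.unitaryGroup (Fin d) ℂ) (hρ : ρ.PosSemidef)
    (hρtr : ρ.trace = 1) {α : ℝ} (hα0 : 0 < α) (hα1 : α < 1) :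
    1 + ∑ k, Wvec U k ^ α ≤ ∑ i, (ρ i i).re ^ α + ∑ j, ((Uᴴ * ρ * U) j j).re ^ α := by
  set x := Sum.elim (fun i => (ρ i i).re) (fun j => ((Uᴴ * ρ * U) j j).re)
  have hx : ∀ i, 0 ≤ x i :=
    Sum.rec (re_diag_nonneg hρ) (re_diag_nonneg (hρ.conjTranspose_mul_mul_same U))
  have htot : sPartialSum U (d + 1) ≤ ∑ i, x i := by
    rw [Fintype.sum_sum_type]
    calc sPartialSum U (d + 1) ≤ 1 + 1 := add_le_add_right (sCoef_le_one hU d) 1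
      _ = _ := (congrArg₂ (· + ·) (sum_re_diag_eq_one hρtr)
          (sum_re_diag_eq_one ((trace_conjTranspose_mul_mul hU ρ).trans hρtr))).symm
  calc 1 + ∑ k, Wvec U k ^ α
      = ∑ k ∈ range (d + 1), (sPartialSum U (k + 1) - sPartialSum U k) ^ α :=
        (sum_sPartialSum_sub_rpow U).symm
    _ ≤ ∑ i, x i ^ α := sum_rpow_le_sum_rpow_of_sum_min_le
        (fun k hk => sub_nonneg.2 (sPartialSum_le_sPartialSum_succ U (mem_range_succ_iff.1 hk)))
        (fun i _ => hx i) hα0 hα1 fun u hu =>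
          sum_min_le_sum_min hx (sum_diag_le_sPartialSum hU hρ hρtr) htot hu.le
    _ = _ := Fintype.sum_sum_type _

end UncertaintyRelation

end EntropicUncertainty

theorem stmt_7_general (d : ℕ)
    (U : Matrix (Fin d) (Fin d) ℂ) (hU : U ∈ Matrix.unitaryGroup (Fin d) ℂ)
    (ρ : Matrix (Fin d) (Fin d) ℂ) (hρ : ρ.PosSemidef) (hρtr : ρ.trace = 1)
    (p q : Fin d → ℝ)
    (hp : ∀ i, p i = (ρ i i).re)
    (hq : ∀ j, q j = ((Uᴴ * ρ * U) j j).re)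
    (α : ℝ) (hα0 : 0 < α) (hα1 : α < 1) :
    renyiEntropy α p + renyiEntropy α q ≥ renyiEntropy α (Wvec U) := by
  obtain rfl : p = fun i => (ρ i i).re := funext hp
  obtain rfl : q = fun j => ((Uᴴ * ρ * U) j j).re := funext hq
  open EntropicUncertainty in
  exact renyiEntropy_le_add_of_one_add_sum_rpow_le (re_diag_nonneg hρ) (sum_re_diag_eq_one hρtr)
    (re_diag_nonneg (hρ.conjTranspose_mul_mul_same U))
    (sum_re_diag_eq_one ((trace_conjTranspose_mul_mul hU ρ).trans hρtr)) (Wvec_nonneg U) hα1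
    (one_add_sum_Wvec_rpow_le hU hρ hρtr hα0 hα1)

/-- **Direct-sum majorization entropic uncertainty relation (Rényi case, `0 < α < 1`)**:
`H_α(p) + H_α(q) ≥ H_α(W)` with `W = (s₁, s₂ - s₁, …, s_d - s_{d-1})`. -/
theorem stmt_7 (d : ℕ) (hd : 2 ≤ d)
    (U : Matrix (Fin d) (Fin d) ℂ) (hU : U ∈ Matrix.unitaryGroup (Fin d) ℂ)
    (ρ : Matrix (Fin d) (Fin d) ℂ) (hρ : ρ.PosSemidef) (hρtr : ρ.trace = 1)
    (p q : Fin d → ℝ)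
    (hp : ∀ i, p i = (ρ i i).re)
    (hq : ∀ j, q j = ((Uᴴ * ρ * U) j j).re)
    (α : ℝ) (hα0 : 0 < α) (hα1 : α < 1) :
    renyiEntropy α p + renyiEntropy α q ≥ renyiEntropy α (Wvec U) :=
  stmt_7_general d U hU ρ hρ hρtr p q hp hq α hα0 hα1
end

section
/- (Direct-sum majorization for several measurements) Let U^{(1)},…,U^{(L)} be d×d unitary matrices with columns u_i^{(j)}, and let ψ ∈ ℂ^d be a unit vector; set p_i^{(j)} = |⟨u_i^{(j)}, ψ⟩|². Then the dL-dimensional vector (p_i^{(j)})_{i=1,…,d; j=1,…,L} is majorized by the vector (1, 𝒮₁−𝒮₀, 𝒮₂−𝒮₁, …, 𝒮_{dL−1}−𝒮_{dL−2}). -/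
open scoped BigOperators Matrix ComplexConjugate ComplexOrder

/-- The operator norm (largest singular value) of the `d × |S|` matrix whose columns are
the columns `u_i^{(j)}` of the unitaries `U j`, for `(i, j) ∈ S`. -/
noncomputable def colOpNorm {d L : ℕ} (U : Fin L → Matrix (Fin d) (Fin d) ℂ)
    (S : Finset (Fin d × Fin L)) : ℝ :=
  sSup { r : ℝ | ∃ (x : Fin d → ℂ) (y : S → ℂ),
    (∑ a, ‖x a‖ ^ 2 = 1) ∧ (∑ s, ‖y s‖ ^ 2 = 1) ∧
    r = ‖∑ a, ∑ s : S, (starRingEnd ℂ) (x a) * U s.1.2 a s.1.1 * y s‖ }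

/-- `multiS U k` is the coefficient `𝒮_k`: the maximal squared operator norm of a
`d × (k+1)` matrix formed by `k + 1` columns taken from the concatenation of the
unitaries `U j`. -/
noncomputable def multiS {d L : ℕ} (U : Fin L → Matrix (Fin d) (Fin d) ℂ) (k : ℕ) : ℝ :=
  (sSup { r : ℝ | ∃ S : Finset (Fin d × Fin L), S.card = k + 1 ∧ r = colOpNorm U S }) ^ 2

/-!
For a set `S` of columns, `∑_{s ∈ S} |⟨u_s, ψ⟩|²` is the squared norm of `M_S^* ψ`, where `M_S`
is the matrix with those columns, so it is at most `‖M_S‖² ≤ 𝒮_{|S|-1}`. The first `k + 1`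
entries of the majorizing vector telescope to exactly `𝒮_k`, which gives the partial-sum
inequalities. Both vectors sum to `L`: each unitary contributes `‖ψ‖² = 1` to the sum of the
`p_i^{(j)}`, and `𝒮_{dL-1} = ‖M‖² = L` because `M M^* = ∑_j U^{(j)} U^{(j)*} = L · 1`.
-/

open Finset Matrix

section Coordinates

variable {n : Type*} [Fintype n]

lemma ofReal_sum_norm_sq (v : n → ℂ) : ((∑ i, ‖v i‖ ^ 2 : ℝ) : ℂ) = star v ⬝ᵥ v := by
  push_cast
  simp [dotProduct, Complex.conj_mul']

lemma norm_sum_mul_le (f g : n → ℂ) :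
    ‖∑ i, f i * g i‖ ≤ √(∑ i, ‖f i‖ ^ 2) * √(∑ i, ‖g i‖ ^ 2) := by
  calc ‖∑ i, f i * g i‖ ≤ ∑ i, ‖f i‖ * ‖g i‖ := by
        simpa only [norm_mul] using norm_sum_le univ fun i => f i * g i
    _ ≤ _ := Real.sum_mul_le_sqrt_mul_sqrt _ _ _

variable [DecidableEq n]

lemma sum_norm_sq_single (i : n) : ∑ a, ‖(Pi.single i 1 : n → ℂ) a‖ ^ 2 = 1 := by
  rw [sum_eq_single i (fun a _ ha => by simp [ha]) (by simp)]
  simp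

variable {V : Matrix n n ℂ}

lemma sum_norm_sq_conjTranspose_mulVec (hV : V ∈ unitaryGroup n ℂ) (x : n → ℂ) :
    ∑ i, ‖(Vᴴ *ᵥ x) i‖ ^ 2 = ∑ a, ‖x a‖ ^ 2 := by
  apply Complex.ofReal_injective
  rw [ofReal_sum_norm_sq, ofReal_sum_norm_sq, star_mulVec, conjTranspose_conjTranspose,
    ← dotProduct_mulVec, mulVec_mulVec, ← star_eq_conjTranspose, mem_unitaryGroup_iff.1 hV,
    one_mulVec]

lemma conjTranspose_mulVec_mulVec (hV : V ∈ unitaryGroup n ℂ) (v : n → ℂ) :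
    Vᴴ *ᵥ (V *ᵥ v) = v := by
  rw [mulVec_mulVec, ← star_eq_conjTranspose, mem_unitaryGroup_iff'.1 hV, one_mulVec]

end Coordinates

section ColumnSystem

variable {d L : ℕ} {U : Fin L → Matrix (Fin d) (Fin d) ℂ}

/-- `colCoeff U x (i, j) = ⟨u_i^{(j)}, x⟩`. -/
def colCoeff (U : Fin L → Matrix (Fin d) (Fin d) ℂ) (x : Fin d → ℂ) (s : Fin d × Fin L) : ℂ :=
  ((U s.2)ᴴ *ᵥ x) s.1

lemma sum_colCoeff_norm_sq (hU : ∀ j, U j ∈ unitaryGroup (Fin d) ℂ) (x : Fin d → ℂ) :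
    ∑ s, ‖colCoeff U x s‖ ^ 2 = L * ∑ a, ‖x a‖ ^ 2 := by
  simp [Fintype.sum_prod_type_right, colCoeff, sum_norm_sq_conjTranspose_mulVec (hU _)]

lemma sum_colCoeff_norm_sq_le (hU : ∀ j, U j ∈ unitaryGroup (Fin d) ℂ) {x : Fin d → ℂ}
    (hx : ∑ a, ‖x a‖ ^ 2 = 1) (S : Finset (Fin d × Fin L)) :
    ∑ s ∈ S, ‖colCoeff U x s‖ ^ 2 ≤ L := by
  calc ∑ s ∈ S, ‖colCoeff U x s‖ ^ 2 ≤ ∑ s, ‖colCoeff U x s‖ ^ 2 :=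
        sum_le_univ_sum_of_nonneg fun _ => sq_nonneg _
    _ = L := by rw [sum_colCoeff_norm_sq hU, hx, mul_one]

lemma sum_sum_conj_mul_eq (S : Finset (Fin d × Fin L)) (x : Fin d → ℂ) (y : S → ℂ) :
    ∑ a, ∑ s : S, conj (x a) * U s.1.2 a s.1.1 * y s = ∑ s : S, conj (colCoeff U x s) * y s := by
  rw [sum_comm]
  refine sum_congr rfl fun s _ => ?_
  simp only [colCoeff, mulVec, dotProduct, conjTranspose_apply, Complex.star_def, map_sum,
    map_mul, Complex.conj_conj, sum_mul]
  exact sum_congr rfl fun a _ => by ring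

lemma norm_sum_sum_conj_mul_le (S : Finset (Fin d × Fin L)) (x : Fin d → ℂ) {y : S → ℂ}
    (hy : ∑ s, ‖y s‖ ^ 2 = 1) :
    ‖∑ a, ∑ s : S, conj (x a) * U s.1.2 a s.1.1 * y s‖ ≤ √(∑ s ∈ S, ‖colCoeff U x s‖ ^ 2) := by
  have h := norm_sum_mul_le (fun s : S => conj (colCoeff U x s)) y
  simp only [Complex.norm_conj, hy, Real.sqrt_one, mul_one,
    sum_coe_sort S fun s => ‖colCoeff U x s‖ ^ 2] at h
  rwa [sum_sum_conj_mul_eq]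

lemma colOpNorm_le_of_forall {S : Finset (Fin d × Fin L)} {c : ℝ} (hc : 0 ≤ c)
    (h : ∀ x : Fin d → ℂ, ∑ a, ‖x a‖ ^ 2 = 1 → ∑ s ∈ S, ‖colCoeff U x s‖ ^ 2 ≤ c ^ 2) :
    colOpNorm U S ≤ c := by
  refine Real.sSup_le ?_ hc
  rintro _ ⟨x, y, hx, hy, rfl⟩
  exact (norm_sum_sum_conj_mul_le S x hy).trans ((Real.sqrt_le_left hc).2 (h x hx))

lemma colOpNorm_le_sqrt (hU : ∀ j, U j ∈ unitaryGroup (Fin d) ℂ) (S : Finset (Fin d × Fin L)) :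
    colOpNorm U S ≤ √L :=
  colOpNorm_le_of_forall (Real.sqrt_nonneg _) fun x hx => by
    rw [Real.sq_sqrt (Nat.cast_nonneg L)]
    exact sum_colCoeff_norm_sq_le hU hx S

lemma colOpNorm_nonneg (S : Finset (Fin d × Fin L)) : 0 ≤ colOpNorm U S :=
  Real.sSup_nonneg <| by
    rintro _ ⟨x, y, -, -, rfl⟩
    exact norm_nonneg _

lemma sqrt_le_colOpNorm (hU : ∀ j, U j ∈ unitaryGroup (Fin d) ℂ) {x : Fin d → ℂ}
    (hx : ∑ a, ‖x a‖ ^ 2 = 1) (S : Finset (Fin d × Fin L)) :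
    √(∑ s ∈ S, ‖colCoeff U x s‖ ^ 2) ≤ colOpNorm U S := by
  set e := ∑ s ∈ S, ‖colCoeff U x s‖ ^ 2
  have he : 0 ≤ e := sum_nonneg fun _ _ => sq_nonneg _
  rcases he.eq_or_lt with he0 | hepos
  · rw [← he0, Real.sqrt_zero]
    exact colOpNorm_nonneg S
  have hsqrt : (√e : ℂ) ≠ 0 := by exact_mod_cast (Real.sqrt_pos.2 hepos).ne'
  -- equality case of Cauchy–Schwarz
  let y : S → ℂ := fun s => colCoeff U x s / (√e : ℂ)
  have hy : ∑ s, ‖y s‖ ^ 2 = 1 := by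
    simp only [y, norm_div, Complex.norm_real, Real.norm_of_nonneg (Real.sqrt_nonneg e), div_pow,
      Real.sq_sqrt he, ← sum_div, sum_coe_sort S fun s => ‖colCoeff U x s‖ ^ 2]
    exact div_self hepos.ne'
  have hval : ∑ s : S, conj (colCoeff U x s) * y s = √e := by
    simp only [y, mul_div_assoc', Complex.conj_mul', ← sum_div, div_eq_iff hsqrt,
      ← Complex.ofReal_mul, Real.mul_self_sqrt he, e]
    push_cast
    exact sum_coe_sort S fun s => (‖colCoeff U x s‖ : ℂ) ^ 2
  refine le_csSup ⟨√L, ?_⟩ ⟨x, y, hx, hy, ?_⟩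
  · rintro _ ⟨x', y', hx', hy', rfl⟩
    exact (norm_sum_sum_conj_mul_le S x' hy').trans
      (Real.sqrt_le_sqrt (sum_colCoeff_norm_sq_le hU hx' S))
  · rw [sum_sum_conj_mul_eq, hval, Complex.norm_real, Real.norm_of_nonneg (Real.sqrt_nonneg _)]

lemma colOpNorm_singleton (hU : ∀ j, U j ∈ unitaryGroup (Fin d) ℂ) (s : Fin d × Fin L) :
    colOpNorm U {s} = 1 := by
  refine le_antisymm (colOpNorm_le_of_forall zero_le_one fun x hx => ?_) ?_
  · rw [sum_singleton, one_pow, ← hx, ← sum_norm_sq_conjTranspose_mulVec (hU s.2) x]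
    exact single_le_sum (f := fun i => ‖((U s.2)ᴴ *ᵥ x) i‖ ^ 2) (fun _ _ => sq_nonneg _)
      (mem_univ s.1)
  · set x := U s.2 *ᵥ Pi.single s.1 1
    have hx : ∑ a, ‖x a‖ ^ 2 = 1 := by
      rw [← sum_norm_sq_conjTranspose_mulVec (hU s.2), conjTranspose_mulVec_mulVec (hU s.2)]
      exact sum_norm_sq_single s.1
    have h := sqrt_le_colOpNorm hU hx {s}
    rwa [sum_singleton, colCoeff, conjTranspose_mulVec_mulVec (hU s.2), Pi.single_eq_same, norm_one,
      one_pow, Real.sqrt_one] at h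

lemma colOpNorm_univ (hd : 0 < d) (hU : ∀ j, U j ∈ unitaryGroup (Fin d) ℂ) :
    colOpNorm U univ = √L := by
  refine le_antisymm (colOpNorm_le_sqrt hU univ) ?_
  have h := sqrt_le_colOpNorm hU (sum_norm_sq_single (⟨0, hd⟩ : Fin d)) univ
  rwa [sum_colCoeff_norm_sq hU, sum_norm_sq_single, mul_one] at h

lemma colOpNorm_sq_le_multiS (hU : ∀ j, U j ∈ unitaryGroup (Fin d) ℂ) {S : Finset (Fin d × Fin L)}
    {k : ℕ} (hS : S.card = k + 1) : colOpNorm U S ^ 2 ≤ multiS U k := by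
  unfold multiS
  gcongr
  · exact colOpNorm_nonneg S
  refine le_csSup ⟨√L, ?_⟩ ⟨S, hS, rfl⟩
  rintro _ ⟨S', -, rfl⟩
  exact colOpNorm_le_sqrt hU S'

lemma sum_colCoeff_norm_sq_le_multiS (hU : ∀ j, U j ∈ unitaryGroup (Fin d) ℂ) {x : Fin d → ℂ}
    (hx : ∑ a, ‖x a‖ ^ 2 = 1) {S : Finset (Fin d × Fin L)} {k : ℕ} (hS : S.card = k + 1) :
    ∑ s ∈ S, ‖colCoeff U x s‖ ^ 2 ≤ multiS U k :=
  (Real.sqrt_le_left (colOpNorm_nonneg S)).1 (sqrt_le_colOpNorm hU hx S) |>.trans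
    (colOpNorm_sq_le_multiS hU hS)

lemma multiS_eq_sq {k : ℕ} {c : ℝ} {S₀ : Finset (Fin d × Fin L)} (hS₀ : S₀.card = k + 1)
    (h : ∀ S : Finset (Fin d × Fin L), S.card = k + 1 → colOpNorm U S = c) :
    multiS U k = c ^ 2 := by
  have hset : {r : ℝ | ∃ S : Finset (Fin d × Fin L), S.card = k + 1 ∧ r = colOpNorm U S} = {c} :=
    Set.eq_singleton_iff_unique_mem.2
      ⟨⟨S₀, hS₀, (h S₀ hS₀).symm⟩, by rintro _ ⟨S, hS, rfl⟩; exact h S hS⟩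
  rw [multiS, hset, csSup_singleton]

lemma multiS_zero (hd : 0 < d) (hL : 0 < L) (hU : ∀ j, U j ∈ unitaryGroup (Fin d) ℂ) :
    multiS U 0 = 1 := by
  rw [multiS_eq_sq (card_singleton ((⟨0, hd⟩, ⟨0, hL⟩) : Fin d × Fin L)) fun S hS => ?_, one_pow]
  obtain ⟨s, rfl⟩ := card_eq_one.1 hS
  exact colOpNorm_singleton hU s

lemma multiS_card_sub_one (hd : 0 < d) (hL : 0 < L) (hU : ∀ j, U j ∈ unitaryGroup (Fin d) ℂ) :
    multiS U (d * L - 1) = L := by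
  have hcard : Fintype.card (Fin d × Fin L) = d * L - 1 + 1 := by
    simp [Nat.sub_add_cancel (Nat.mul_pos hd hL)]
  rw [multiS_eq_sq (card_univ.trans hcard) fun S hS => ?_, Real.sq_sqrt (Nat.cast_nonneg L)]
  rw [eq_univ_of_card S (hS.trans hcard.symm)]
  exact colOpNorm_univ hd hU

end ColumnSystem

lemma sum_range_succ_increments {G : Type*} [AddCommGroup G] {g : ℕ → G} {a : G} (hg : g 0 = a)
    (m : ℕ) : ∑ t ∈ range (m + 1), (if t = 0 then a else g t - g (t - 1)) = g m := by
  simp [sum_range_succ', sum_range_sub g, hg]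

lemma exists_card_eq_sum_eq_sum_range {M : Type*} [AddCommMonoid M] {m n : ℕ} (h : m ≤ n)
    (f : ℕ → M) : ∃ B : Finset (Fin n), B.card = m ∧ ∑ k ∈ B, f k = ∑ t ∈ range m, f t :=
  ⟨univ.map (Fin.castLEEmb h), by simp, by simp [Fin.sum_univ_eq_sum_range]⟩

/-- **Direct-sum majorization for several measurements**: for unitaries
`U 1, …, U L` with columns `u_i^{(j)}` and a unit vector `ψ`, the `dL`-dimensional
vector of probabilities `p (i, j) = |⟨u_i^{(j)}, ψ⟩|²` is majorized by
`(1, 𝒮₁ - 𝒮₀, 𝒮₂ - 𝒮₁, …, 𝒮_{dL-1} - 𝒮_{dL-2})`. -/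
theorem stmt_13 (d L : ℕ) (hd : 1 ≤ d) (hL : 1 ≤ L)
    (U : Fin L → Matrix (Fin d) (Fin d) ℂ)
    (hU : ∀ j, U j ∈ Matrix.unitaryGroup (Fin d) ℂ)
    (ψ : Fin d → ℂ) (hψ : ∑ a, ‖ψ a‖ ^ 2 = 1)
    (p : Fin d × Fin L → ℝ)
    (hp : ∀ i j, p (i, j) = ‖∑ a, (starRingEnd ℂ) (U j a i) * ψ a‖ ^ 2) :
    Majorizes p
      (fun k : Fin (d * L) =>
        if k.val = 0 then 1 else multiS U k.val - multiS U (k.val - 1)) := by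
  set y : ℕ → ℝ := fun t => if t = 0 then 1 else multiS U t - multiS U (t - 1)
  have hpψ : ∀ s, p s = ‖colCoeff U ψ s‖ ^ 2 := fun s => hp s.1 s.2
  have hpartial : ∀ k, ∑ t ∈ range (k + 1), y t = multiS U k :=
    sum_range_succ_increments (multiS_zero hd hL hU)
  refine ⟨?_, fun A => ?_⟩
  · calc ∑ s, p s = L := by simp only [hpψ, sum_colCoeff_norm_sq hU, hψ, mul_one]
      _ = ∑ t ∈ range (d * L - 1 + 1), y t := by rw [hpartial, multiS_card_sub_one hd hL hU]
      _ = ∑ k : Fin (d * L), y k := by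
        rw [Nat.sub_add_cancel (Nat.mul_pos hd hL), Fin.sum_univ_eq_sum_range]
  cases hA : A.card with
  | zero => exact ⟨∅, by simp, by simp [card_eq_zero.1 hA]⟩
  | succ k =>
    have hk : k + 1 ≤ d * L := by simpa [hA] using card_le_univ A
    obtain ⟨B, hB, hBy⟩ := exists_card_eq_sum_eq_sum_range hk y
    refine ⟨B, hB.le, ?_⟩
    calc ∑ s ∈ A, p s = ∑ s ∈ A, ‖colCoeff U ψ s‖ ^ 2 := sum_congr rfl fun s _ => hpψ s
      _ ≤ multiS U k := sum_colCoeff_norm_sq_le_multiS hU hψ hA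
      _ = ∑ k ∈ B, y k := by rw [hBy, hpartial]
end
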